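/- Let H = 2P_1+P_4 (two isolated vertices together with a path on four vertices). For every black-and-white labelling ℓ of H, the bipartite complement of H with respect to ℓ contains an induced subgraph isomorphic to the cycle C_4; in particular, this bipartite complement does not belong to the class S. -/

import Mathlib

open SimpleGraph

/-- `B` is the black colour class of a black-and-white labelling of `H`:
every edge of `H` joins a vertex of `B` to a vertex outside `B`
(equivalently, `B` and its complement `Bᶜ` are both independent sets,
i.e. `(B, Bᶜ)` is a bipartition of `H` into two possibly empty independent sets). -/
def IsBWLabelling {V : Type*} (H : SimpleGraph V) (B : Set V) : Prop :=
  ∀ ⦃u v : V⦄, H.Adj u v → (u ∈ B ↔ v ∉ B)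

/-- `H` with black class `BH` is a labelled induced subgraph of `G` with black class `BG`:
there is an injective map preserving both adjacency and non-adjacency which maps
black vertices to black vertices and white vertices to white vertices. -/
def LabelledIndSubgraph {VH VG : Type*} (H : SimpleGraph VH) (BH : Set VH)
    (G : SimpleGraph VG) (BG : Set VG) : Prop :=
  ∃ f : VH → VG, Function.Injective f ∧
    (∀ u v : VH, H.Adj u v ↔ G.Adj (f u) (f v)) ∧
    (∀ u : VH, u ∈ BH ↔ f u ∈ BG)

/-- `G` is strongly `H^ℓ`-free, where `BH` is the black class of the labelling `ℓ`:
there is no bipartition `(BG, BGᶜ)` of `G` such that `H^ℓ` is a labelled induced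
subgraph of `(BG, BGᶜ, E_G)`. -/
def StronglyFree {VG VH : Type*} (G : SimpleGraph VG) (H : SimpleGraph VH)
    (BH : Set VH) : Prop :=
  ¬ ∃ BG : Set VG, IsBWLabelling G BG ∧ LabelledIndSubgraph H BH G BG

/-- `G` is weakly `H^ℓ`-free, where `BH` is the black class of the labelling `ℓ`:
it is not the case that `H^ℓ` is a labelled induced subgraph of `(BG, BGᶜ, E_G)`
for every bipartition `(BG, BGᶜ)` of `G`. -/
def WeaklyFree {VG VH : Type*} (G : SimpleGraph VG) (H : SimpleGraph VH)
    (BH : Set VH) : Prop :=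
  ¬ ∀ BG : Set VG, IsBWLabelling G BG → LabelledIndSubgraph H BH G BG

/-- `G` is `H`-free: `G` contains no induced subgraph isomorphic to `H`. -/
def HFree {VG VH : Type*} (G : SimpleGraph VG) (H : SimpleGraph VH) : Prop :=
  ¬ ∃ f : VH → VG, Function.Injective f ∧ ∀ u v : VH, H.Adj u v ↔ G.Adj (f u) (f v)

/-- The bipartite complement of `H` with respect to the black-and-white labelling
with black class `B`: a black vertex and a white vertex are adjacent if and only if
they are non-adjacent in `H`, and no two vertices of the same colour are adjacent. -/
def bipComplement {V : Type*} (H : SimpleGraph V) (B : Set V) : SimpleGraph V :=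
  SimpleGraph.fromRel (fun u v => u ∈ B ∧ v ∉ B ∧ ¬ H.Adj u v)

/-- The subdivided claw `S_{h,i,j}` (for `1 ≤ h ≤ i ≤ j`): the tree with one centre
vertex `0` of degree `3` and three paths attached to it, with leaves at distance
`h`, `i` and `j` from the centre. The vertices of the three paths are
`1, …, h`, `h+1, …, h+i` and `h+i+1, …, h+i+j`, respectively. -/
def subdividedClaw (h i j : ℕ) : SimpleGraph (Fin (h + i + j + 1)) :=
  SimpleGraph.fromRel (fun a b =>
    (a.val = 0 ∧ (b.val = 1 ∨ b.val = h + 1 ∨ b.val = h + i + 1)) ∨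
    (1 ≤ a.val ∧ b.val = a.val + 1 ∧
      (b.val ≤ h ∨ (h + 1 ≤ a.val ∧ b.val ≤ h + i) ∨
        (h + i + 1 ≤ a.val ∧ b.val ≤ h + i + j))))

/-- `H` belongs to the class `S`: every connected component of `H` is isomorphic
to a path `P_r` for some `r ≥ 1` or to a subdivided claw `S_{h,i,j}` for some
`1 ≤ h ≤ i ≤ j`. -/
def InClassS {V : Type*} (H : SimpleGraph V) : Prop :=
  ∀ c : H.ConnectedComponent,
    (∃ r : ℕ, 1 ≤ r ∧ Nonempty ((H.induce c.supp) ≃g SimpleGraph.pathGraph r)) ∨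
    (∃ h i j : ℕ, 1 ≤ h ∧ h ≤ i ∧ i ≤ j ∧
      Nonempty ((H.induce c.supp) ≃g subdividedClaw h i j))

/-- The graph `2P_1 + P_4`: vertices `0, 1` isolated, path `2-3-4-5`. -/
def g2P1'P4 : SimpleGraph (Fin 6) :=
  SimpleGraph.fromEdgeSet {s(2, 3), s(3, 4), s(4, 5)}

/-!
A black-and-white labelling of `2P₁ + P₄` alternates along the path `2-3-4-5`, and swapping the
two colours does not change the bipartite complement, so we may assume `2, 4` black and `3, 5`
white. Two black and two white vertices with no edge of `H` between them span an induced `C₄` of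
the bipartite complement: take `{0, 1}` with `{3, 5}` or with `{2, 4}` when `0, 1` have the same
colour, and `0, 1` together with the non-adjacent path ends `2, 5` otherwise.

A `C₄` lies in one component. In the vertex orders of `pathGraph r` and `subdividedClaw h i j`
every vertex has at most one smaller neighbour, whereas the largest vertex of a `C₄` has two; so
no component of a graph of the class `S` contains a `C₄`.
-/

namespace SimpleGraph

variable {V W : Type*} {G : SimpleGraph V}

lemma nonempty_cycleGraph_four_embedding_of_adj {a b c d : V}
    (hab : G.Adj a b) (hbc : G.Adj b c) (hcd : G.Adj c d) (hda : G.Adj d a)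
    (hac : ¬ G.Adj a c) (hbd : ¬ G.Adj b d) (hac' : a ≠ c) (hbd' : b ≠ d) :
    Nonempty (cycleGraph 4 ↪g G) := by
  have := hab.ne; have := hbc.ne; have := hcd.ne; have := hda.ne
  refine ⟨⟨⟨![a, b, c, d], fun x y hxy => ?_⟩, fun {x y} => ?_⟩⟩
  · fin_cases x <;> fin_cases y <;> simp_all [eq_comm]
  · show G.Adj (![a, b, c, d] x) (![a, b, c, d] y) ↔ _
    fin_cases x <;> fin_cases y <;> simp +decide [G.adj_comm, hda.symm, *]

def AtMostOneLowerNeighbour [LinearOrder V] (G : SimpleGraph V) : Prop :=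
  ∀ ⦃u w v⦄, G.Adj u v → G.Adj w v → u < v → w < v → u = w

lemma AtMostOneLowerNeighbour.isEmpty_cycleGraph_four_embedding [LinearOrder V]
    (hG : G.AtMostOneLowerNeighbour) : IsEmpty (cycleGraph 4 ↪g G) := by
  refine ⟨fun e => ?_⟩
  have adj : ∀ i j : Fin 4, (cycleGraph 4).Adj i j → G.Adj (e i) (e j) :=
    fun i j h => e.map_adj_iff.2 h
  have key : ∀ {x y z : V}, G.Adj y x → G.Adj z x → y ≠ z → x ≤ y ∨ x ≤ z := by
    intro x y z hy hz hyz
    by_contra! h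
    exact hyz (hG hy hz h.1 h.2)
  have hac : e 0 ≠ e 2 := e.injective.ne (by decide)
  have hbd : e 1 ≠ e 3 := e.injective.ne (by decide)
  have h01 := adj 0 1 (by decide); have h12 := adj 1 2 (by decide)
  have h23 := adj 2 3 (by decide); have h30 := adj 3 0 (by decide)
  have := h01.ne; have := h12.ne; have := h23.ne; have := h30.ne
  rcases key h01.symm h30 hbd with h | h <;> rcases key h12 h23.symm hbd with h' | h' <;>
    rcases key h01 h12.symm hac with h'' | h'' <;>
    rcases key h30.symm h23 hac with h''' | h''' <;> order

lemma atMostOneLowerNeighbour_pathGraph (r : ℕ) : (pathGraph r).AtMostOneLowerNeighbour := by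
  intro u w v huv hwv hu hw
  rw [pathGraph_adj] at huv hwv
  rw [Fin.lt_def] at hu hw
  exact Fin.val_injective (by omega)

lemma Connected.exists_embedding_induce_supp {H : SimpleGraph W} (hH : H.Connected)
    (f : H ↪g G) : ∃ c : G.ConnectedComponent, Nonempty (H ↪g G.induce c.supp) := by
  obtain ⟨w⟩ := hH.nonempty
  refine ⟨G.connectedComponentMk (f w), ⟨(G.induceHomOfLE ?_).comp f.isoInduceRange.toEmbedding⟩⟩
  rintro _ ⟨x, rfl⟩
  exact ConnectedComponent.sound ((hH.preconnected x w).map f.toHom)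

end SimpleGraph

open SimpleGraph

lemma atMostOneLowerNeighbour_subdividedClaw (h i j : ℕ) :
    (subdividedClaw h i j).AtMostOneLowerNeighbour := by
  intro u w v huv hwv hu hw
  simp only [subdividedClaw, fromRel_adj] at huv hwv
  rw [Fin.lt_def] at hu hw
  exact Fin.val_injective (by omega)

lemma not_inClassS_of_cycleGraph_four_embedding {V : Type*} {G : SimpleGraph V}
    (e : cycleGraph 4 ↪g G) : ¬ InClassS G := by
  intro hS
  obtain ⟨c, ⟨e⟩⟩ := cycleGraph_connected.exists_embedding_induce_supp e
  rcases hS c with ⟨r, -, ⟨φ⟩⟩ | ⟨h, i, j, -, -, -, ⟨φ⟩⟩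
  · exact (atMostOneLowerNeighbour_pathGraph r).isEmpty_cycleGraph_four_embedding.false
      (φ.toEmbedding.comp e)
  · exact (atMostOneLowerNeighbour_subdividedClaw h i j).isEmpty_cycleGraph_four_embedding.false
      (φ.toEmbedding.comp e)

section

variable {V : Type*} {H : SimpleGraph V} {B : Set V}

lemma bipComplement_adj {u v : V} :
    (bipComplement H B).Adj u v ↔ (u ∈ B ↔ v ∉ B) ∧ ¬ H.Adj u v := by
  rw [bipComplement, fromRel_adj, H.adj_comm v u]
  by_cases hu : u ∈ B <;> by_cases hv : v ∈ B <;> simp [hu, hv] <;> rintro - rfl <;> contradiction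

lemma bipComplement_compl : bipComplement H Bᶜ = bipComplement H B := by
  ext u v
  simp only [bipComplement_adj, Set.mem_compl_iff, not_not]
  tauto

lemma IsBWLabelling.compl (hB : IsBWLabelling H B) : IsBWLabelling H Bᶜ :=
  fun _ _ h => (hB h).not

lemma nonempty_cycleGraph_four_embedding_bipComplement {b₁ b₂ w₁ w₂ : V} (hb : b₁ ≠ b₂)
    (hw : w₁ ≠ w₂) (hb₁ : b₁ ∈ B) (hb₂ : b₂ ∈ B) (hw₁ : w₁ ∉ B) (hw₂ : w₂ ∉ B)
    (hH : ∀ b ∈ [b₁, b₂], ∀ w ∈ [w₁, w₂], ¬ H.Adj b w) :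
    Nonempty (cycleGraph 4 ↪g bipComplement H B) := by
  simp only [List.mem_cons, List.not_mem_nil, or_false, forall_eq_or_imp, forall_eq] at hH
  have adj : ∀ {b w}, b ∈ B → w ∉ B → ¬ H.Adj b w → (bipComplement H B).Adj b w :=
    fun hb hw h => bipComplement_adj.2 ⟨iff_of_true hb hw, h⟩
  refine nonempty_cycleGraph_four_embedding_of_adj (adj hb₁ hw₁ hH.1.1) (adj hb₂ hw₁ hH.2.1).symm
    (adj hb₂ hw₂ hH.2.2) (adj hb₁ hw₂ hH.1.2).symm ?_ ?_ hb hw <;>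
  simp [bipComplement_adj, *]

end

lemma nonempty_cycleGraph_four_embedding_bipComplement_g2P1'P4 {B : Set (Fin 6)}
    (hB : IsBWLabelling g2P1'P4 B) (h2 : 2 ∈ B) :
    Nonempty (cycleGraph 4 ↪g bipComplement g2P1'P4 B) := by
  have h3 : 3 ∉ B := (hB (by simp [g2P1'P4])).1 h2
  have h4 : 4 ∈ B := by have := @hB 3 4 (by simp [g2P1'P4]); tauto
  have h5 : 5 ∉ B := (hB (by simp [g2P1'P4])).1 h4
  by_cases h0 : 0 ∈ B <;> by_cases h1 : 1 ∈ B
  · exact nonempty_cycleGraph_four_embedding_bipComplement (by decide) (by decide) h0 h1 h3 h5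
      (by simp [g2P1'P4])
  · exact nonempty_cycleGraph_four_embedding_bipComplement (by decide) (by decide) h0 h2 h1 h5
      (by simp [g2P1'P4])
  · exact nonempty_cycleGraph_four_embedding_bipComplement (by decide) (by decide) h1 h2 h0 h5
      (by simp [g2P1'P4])
  · exact nonempty_cycleGraph_four_embedding_bipComplement (by decide) (by decide) h2 h4 h0 h1
      (by simp [g2P1'P4])

/-- For every black-and-white labelling of `2P_1 + P_4`, the bipartite complement
of `2P_1 + P_4` with respect to it contains an induced subgraph isomorphic to the
cycle `C_4`; in particular, this bipartite complement does not belong to the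
class `S`. -/
theorem stmt_11 (B : Set (Fin 6)) (hB : IsBWLabelling g2P1'P4 B) :
    Nonempty (SimpleGraph.cycleGraph 4 ↪g bipComplement g2P1'P4 B) ∧
    ¬ InClassS (bipComplement g2P1'P4 B) := by
  have hC4 : Nonempty (cycleGraph 4 ↪g bipComplement g2P1'P4 B) := by
    by_cases h2 : 2 ∈ B
    · exact nonempty_cycleGraph_four_embedding_bipComplement_g2P1'P4 hB h2
    · rw [← bipComplement_compl]
      exact nonempty_cycleGraph_four_embedding_bipComplement_g2P1'P4 hB.compl h2
  exact ⟨hC4, not_inClassS_of_cycleGraph_four_embedding hC4.some⟩
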